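/- arXiv:1110.4721 — 3 statements merged into one kernel-verified Lean document; each statement's English description precedes it below -/
import Mathlib

section
/- (Proposition 1, product form.) Fix 0 ≤ α < 1. For every τ > 0 and every δ > 0 there exists n₀ ∈ ℕ such that |P_{N,α}(t) − 1| < δ for all integers N > n₀ and all t ∈ ℝ with |t| ≤ τ. -/
/-- Kac normalization `𝒩_α(N) = (2 ∑_{j=1}^{⌊N/2⌋} j^{−α})⁻¹`. -/
noncomputable def kacNorm (α : ℝ) (N : ℕ) : ℝ :=
  (2 * ∑ j ∈ Finset.Icc 1 (N / 2), (j : ℝ) ^ (-α))⁻¹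

/-- The relaxation product `P_{N,α}(t) = ∏_{j=1}^{⌊N/2⌋} cos²(2 𝒩_α(N) t j^{−α})`. -/
noncomputable def relaxProd (α : ℝ) (N : ℕ) (t : ℝ) : ℝ :=
  ∏ j ∈ Finset.Icc 1 (N / 2), Real.cos (2 * kacNorm α N * t * (j : ℝ) ^ (-α)) ^ 2

/-!
Write `w_j = j^{-α} ∈ (0, 1]` and `S_M = ∑_{j ≤ M} w_j`, so that
`P_{N,α}(t) = ∏ cos²(t w_j / S)` with `M = ⌊N/2⌋`. By the Weierstrass product inequality and
`sin² x ≤ x²`, `1 - P ≤ ∑ sin²(t w_j / S) ≤ t² ∑ w_j² / S² ≤ t² / S`, using `w_j² ≤ w_j`.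
Since `w_j ≥ M^{-α}`, `S_M ≥ M^{1-α} → ∞` for `α < 1`, so `1 - P → 0` uniformly
on `|t| ≤ τ`.
-/

open Finset Filter

theorem Finset.one_sub_sum_le_prod_one_sub {ι : Type*} (s : Finset ι) (f : ι → ℝ)
    (h0 : ∀ i ∈ s, 0 ≤ f i) (h1 : ∀ i ∈ s, f i ≤ 1) :
    1 - ∑ i ∈ s, f i ≤ ∏ i ∈ s, (1 - f i) := by
  induction s using Finset.cons_induction with
  | empty => simp
  | cons a s _ ih =>
    rw [sum_cons, prod_cons]
    have h0a := h0 a (mem_cons_self a s)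
    have h1a := h1 a (mem_cons_self a s)
    have ih' := ih (fun i hi => h0 i (mem_cons_of_mem hi)) (fun i hi => h1 i (mem_cons_of_mem hi))
    have hsum : 0 ≤ ∑ i ∈ s, f i := sum_nonneg fun i hi => h0 i (mem_cons_of_mem hi)
    nlinarith [mul_le_mul_of_nonneg_left ih' (sub_nonneg.2 h1a)]

theorem one_sub_sq_div_sum_le_prod_cos_sq {ι : Type*} (s : Finset ι) (w : ι → ℝ)
    (hw0 : ∀ i ∈ s, 0 ≤ w i) (hw1 : ∀ i ∈ s, w i ≤ 1) (t : ℝ) :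
    1 - t ^ 2 / ∑ i ∈ s, w i ≤ ∏ i ∈ s, Real.cos (t * w i / ∑ i ∈ s, w i) ^ 2 := by
  set S := ∑ i ∈ s, w i
  have hsin : ∑ i ∈ s, Real.sin (t * w i / S) ^ 2 ≤ t ^ 2 / S := by
    calc ∑ i ∈ s, Real.sin (t * w i / S) ^ 2
        ≤ ∑ i ∈ s, t ^ 2 / S ^ 2 * w i := by
          refine sum_le_sum fun i hi => ?_
          have hw_sq : w i ^ 2 ≤ w i := by nlinarith [hw0 i hi, hw1 i hi]
          calc Real.sin (t * w i / S) ^ 2 ≤ (t * w i / S) ^ 2 := Real.sin_sq_le_sq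
            _ = t ^ 2 / S ^ 2 * w i ^ 2 := by ring
            _ ≤ t ^ 2 / S ^ 2 * w i := by gcongr
      _ = t ^ 2 / S := by
          rcases eq_or_ne S 0 with hS | hS
          · simp [S, hS]
          · rw [← mul_sum, sq S, ← div_div, div_mul_cancel₀ _ hS]
  calc 1 - t ^ 2 / S ≤ 1 - ∑ i ∈ s, Real.sin (t * w i / S) ^ 2 := by linarith
    _ ≤ ∏ i ∈ s, (1 - Real.sin (t * w i / S) ^ 2) :=
        one_sub_sum_le_prod_one_sub s _ (fun _ _ => sq_nonneg _) fun _ _ => Real.sin_sq_le_one _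
    _ = ∏ i ∈ s, Real.cos (t * w i / S) ^ 2 := by simp only [Real.cos_sq']

noncomputable def kacSum (α : ℝ) (M : ℕ) : ℝ :=
  ∑ j ∈ Icc 1 M, (j : ℝ) ^ (-α)

theorem relaxProd_eq_prod_cos_sq (α : ℝ) (N : ℕ) (t : ℝ) :
    relaxProd α N t =
      ∏ j ∈ Icc 1 (N / 2), Real.cos (t * (j : ℝ) ^ (-α) / kacSum α (N / 2)) ^ 2 := by
  have h2 : 2 * kacNorm α N = (kacSum α (N / 2))⁻¹ := by
    rw [kacNorm, kacSum, mul_inv, ← mul_assoc, mul_inv_cancel₀ two_ne_zero, one_mul]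
  refine prod_congr rfl fun j _ => ?_
  rw [h2, div_eq_inv_mul, mul_assoc]

theorem relaxProd_le_one (α : ℝ) (N : ℕ) (t : ℝ) : relaxProd α N t ≤ 1 :=
  prod_le_one (fun _ _ => sq_nonneg _) fun _ _ => Real.cos_sq_le_one _

theorem one_sub_sq_div_kacSum_le_relaxProd {α : ℝ} (hα : 0 ≤ α) (N : ℕ) (t : ℝ) :
    1 - t ^ 2 / kacSum α (N / 2) ≤ relaxProd α N t := by
  rw [relaxProd_eq_prod_cos_sq]
  refine one_sub_sq_div_sum_le_prod_cos_sq _ _ (fun j _ => by positivity) (fun j hj => ?_) t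
  have hj : (1 : ℝ) ≤ j := by exact_mod_cast (mem_Icc.1 hj).1
  exact Real.rpow_le_one_of_one_le_of_nonpos hj (neg_nonpos.2 hα)

theorem rpow_one_sub_le_kacSum {α : ℝ} (hα : 0 ≤ α) {M : ℕ} (hM : 1 ≤ M) :
    (M : ℝ) ^ (1 - α) ≤ kacSum α M := by
  have hM0 : (0 : ℝ) < M := by exact_mod_cast hM
  calc (M : ℝ) ^ (1 - α) = ∑ _j ∈ Icc 1 M, (M : ℝ) ^ (-α) := by
        rw [sum_const, Nat.card_Icc, Nat.add_sub_cancel, nsmul_eq_mul, sub_eq_add_neg,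
          Real.rpow_add hM0, Real.rpow_one]
    _ ≤ kacSum α M := sum_le_sum fun j hj => by
        obtain ⟨hj1, hjM⟩ := mem_Icc.1 hj
        exact Real.rpow_le_rpow_of_nonpos (by exact_mod_cast hj1) (by exact_mod_cast hjM)
          (neg_nonpos.2 hα)

theorem tendsto_kacSum_atTop {α : ℝ} (hα0 : 0 ≤ α) (hα1 : α < 1) :
    Tendsto (kacSum α) atTop atTop := by
  refine tendsto_atTop_mono' atTop ?_
    ((tendsto_rpow_atTop (sub_pos.2 hα1)).comp tendsto_natCast_atTop_atTop)
  filter_upwards [eventually_ge_atTop 1] with M hM using rpow_one_sub_le_kacSum hα0 hM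

theorem stmt_3_general (α : ℝ) (hα0 : 0 ≤ α) (hα1 : α < 1) (τ δ : ℝ) (hδ : 0 < δ) :
    ∃ n₀ : ℕ, ∀ N : ℕ, N > n₀ → ∀ t : ℝ, |t| ≤ τ → |relaxProd α N t - 1| < δ := by
  have hS : ∀ᶠ N in atTop, τ ^ 2 / δ < kacSum α (N / 2) :=
    ((tendsto_kacSum_atTop hα0 hα1).comp
      (Nat.tendsto_div_const_atTop two_ne_zero)).eventually_gt_atTop _
  obtain ⟨n₀, hn₀⟩ := eventually_atTop.1 hS
  refine ⟨n₀, fun N hN t ht => ?_⟩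
  have hSN := hn₀ N hN.le
  have hS_pos : 0 < kacSum α (N / 2) := lt_of_le_of_lt (by positivity) hSN
  have ht2 : t ^ 2 ≤ τ ^ 2 := by
    simpa only [sq_abs] using pow_le_pow_left₀ (abs_nonneg t) ht 2
  have hsmall : τ ^ 2 / kacSum α (N / 2) < δ := by
    rw [div_lt_iff₀ hS_pos]
    rwa [div_lt_iff₀ hδ, mul_comm] at hSN
  have hlower := one_sub_sq_div_kacSum_le_relaxProd hα0 N t
  have hdiv : t ^ 2 / kacSum α (N / 2) ≤ τ ^ 2 / kacSum α (N / 2) := by gcongr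
  rw [abs_sub_comm, abs_of_nonneg (sub_nonneg.2 (relaxProd_le_one α N t))]
  linarith

/-- Proposition 1, product form: for `0 ≤ α < 1`, for every `τ > 0` and `δ > 0`
there is `n₀` such that `|P_{N,α}(t) − 1| < δ` for all `N > n₀` and all `|t| ≤ τ`. -/
theorem stmt_3 (α : ℝ) (hα0 : 0 ≤ α) (hα1 : α < 1) (τ δ : ℝ) (hτ : 0 < τ) (hδ : 0 < δ) :
    ∃ n₀ : ℕ, ∀ N : ℕ, N > n₀ → ∀ t : ℝ, |t| ≤ τ → |relaxProd α N t - 1| < δ :=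
  stmt_3_general α hα0 hα1 τ δ hδ
end

section
/- Fix 0 ≤ α < 1/2 and τ ∈ ℝ. Then limsup_{N→∞} P_{N,α}(τ √N) ≤ exp(−(4(1−α)/(2^α π))² τ² / (1−2α)). -/
/-!
Write `S_β(M) = ∑_{j=1}^M j^{-β}` and `q_N = (2 𝒩_α(N) τ √N)² = τ² N / S_α(⌊N/2⌋)²`. Each factor of
`P_{N,α}(τ√N)` is `cos² x_j` with `x_j² = q_N j^{-2α} ≤ q_N`, and `cos² x = 1 - sin² x ≤ exp(-sin² x)`
together with `sin² x ≥ x² - x⁴/3` gives `P_{N,α}(τ√N) ≤ exp(-(1 - q_N/3) q_N S_{2α}(⌊N/2⌋))`.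
Comparing with `∫ x^{-β}` yields `S_β(M) ~ M^{1-β}/(1-β)` for `0 ≤ β < 1`, hence
`q_N S_{2α}(⌊N/2⌋) → 2(1-α)²τ²/(1-2α)` and, as `S_{2α} → ∞`, `q_N → 0`. So the limsup is at most
`exp(-2(1-α)²τ²/(1-2α))`, which is below the stated bound because `(2^α π)² ≥ π² > 8`.
-/

open Real Filter Finset Asymptotics Topology

namespace Real

-- From `|x - sin x| ≤ |x|³/6`; when `|x|³/6 > |x|` the left-hand side is negative anyway.
lemma sq_sub_pow_four_div_three_le_sin_sq (x : ℝ) : x ^ 2 - x ^ 4 / 3 ≤ sin x ^ 2 := by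
  have h := abs_sub_sin_le x
  have hs : |x| - |x| ^ 3 / 6 ≤ |sin x| := by
    have := abs_sub_abs_le_abs_sub x (sin x); linarith
  rcases le_or_gt 0 (|x| - |x| ^ 3 / 6) with h0 | h0
  · have := pow_le_pow_left₀ h0 hs 2
    have hx4 : x ^ 4 = |x| ^ 4 := by rw [show 4 = 2 * 2 from rfl, pow_mul, pow_mul, sq_abs]
    rw [sq_abs] at this
    nlinarith [sq_abs x, sq_nonneg (|x| ^ 3 / 6)]
  · nlinarith [sq_abs x, sq_nonneg (sin x), abs_nonneg x]

lemma cos_sq_le_exp_neg_mul_sq {x c : ℝ} (hx : x ^ 2 ≤ c) :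
    cos x ^ 2 ≤ exp (-((1 - c / 3) * x ^ 2)) :=
  calc cos x ^ 2 = -sin x ^ 2 + 1 := by rw [cos_sq']; ring
    _ ≤ exp (-sin x ^ 2) := add_one_le_exp _
    _ ≤ exp (-((1 - c / 3) * x ^ 2)) := by
      gcongr
      nlinarith [sq_sub_pow_four_div_three_le_sin_sq x, sq_nonneg x]

end Real

lemma prod_cos_sq_mul_le_exp {ι : Type*} (s : Finset ι) (w : ι → ℝ) (hw : ∀ i ∈ s, w i ^ 2 ≤ 1)
    (a : ℝ) : ∏ i ∈ s, cos (a * w i) ^ 2 ≤ exp (-((1 - a ^ 2 / 3) * a ^ 2 * ∑ i ∈ s, w i ^ 2)) :=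
  calc ∏ i ∈ s, cos (a * w i) ^ 2
      ≤ ∏ i ∈ s, exp (-((1 - a ^ 2 / 3) * (a * w i) ^ 2)) := by
        refine prod_le_prod (fun i _ => sq_nonneg _) fun i hi => cos_sq_le_exp_neg_mul_sq ?_
        rw [mul_pow]
        exact mul_le_of_le_one_right (sq_nonneg a) (hw i hi)
    _ = exp (-((1 - a ^ 2 / 3) * a ^ 2 * ∑ i ∈ s, w i ^ 2)) := by
        rw [← exp_sum, mul_sum, ← sum_neg_distrib]
        exact congrArg exp (sum_congr rfl fun i _ => by ring)

section PowerSums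

variable {β : ℝ}

lemma integral_one_rpow_neg (hβ : β < 1) (b : ℝ) :
    ∫ x in (1 : ℝ)..b, x ^ (-β) = (b ^ (1 - β) - 1) / (1 - β) := by
  rw [integral_rpow (Or.inl (by linarith)), one_rpow, neg_add_eq_sub]

lemma abs_sum_Icc_rpow_neg_sub_le (hβ0 : 0 ≤ β) (hβ1 : β < 1) (M : ℕ) :
    |∑ j ∈ Icc 1 M, (j : ℝ) ^ (-β) - (M : ℝ) ^ (1 - β) / (1 - β)| ≤ 1 / (1 - β) := by
  have hp : 0 < 1 - β := by linarith
  have hanti : AntitoneOn (fun x : ℝ => x ^ (-β)) (Set.Ici 1) := fun x hx y _ hxy =>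
    rpow_le_rpow_of_nonpos (zero_lt_one.trans_le hx) hxy (neg_nonpos.2 hβ0)
  have hlower : ((M : ℝ) ^ (1 - β) - 1) / (1 - β) ≤ ∑ j ∈ Icc 1 M, (j : ℝ) ^ (-β) := by
    have h := AntitoneOn.integral_le_sum_Ico (Nat.le_add_left 1 M) (hanti.mono ?_)
    · push_cast at h
      rw [integral_one_rpow_neg hβ1, Finset.Ico_add_one_right_eq_Icc] at h
      refine le_trans ?_ h
      gcongr; linarith
    · exact fun x hx => by simpa using hx.1
  have hupper : ∀ K : ℕ, ∑ j ∈ Icc 1 (K + 1), (j : ℝ) ^ (-β) ≤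
      (((K + 1 : ℕ) : ℝ) ^ (1 - β) - 1) / (1 - β) + 1 := by
    intro K
    have h := AntitoneOn.sum_le_integral (x₀ := 1) (a := K) (hanti.mono fun x hx => hx.1)
    rw [integral_one_rpow_neg hβ1] at h
    rw [← Finset.Ico_add_one_right_eq_Icc, sum_Ico_eq_sum_range,
      Nat.add_sub_cancel, sum_range_succ']
    push_cast at h ⊢
    simp only [add_comm (1 : ℝ)] at h ⊢
    simpa using h
  have h1p : 1 ≤ 1 / (1 - β) := by rw [le_div_iff₀ hp]; linarith
  rcases M with _ | K
  · simp [zero_rpow hp.ne']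
    linarith
  · have := hupper K
    rw [sub_div] at hlower this
    rw [abs_le]
    constructor <;> linarith

lemma tendsto_natCast_rpow_div_atTop (hβ1 : β < 1) :
    Tendsto (fun M : ℕ => (M : ℝ) ^ (1 - β) / (1 - β)) atTop atTop :=
  ((tendsto_rpow_atTop (by linarith)).comp tendsto_natCast_atTop_atTop).atTop_div_const
    (by linarith)

lemma isEquivalent_sum_Icc_rpow_neg (hβ0 : 0 ≤ β) (hβ1 : β < 1) :
    (fun M : ℕ => ∑ j ∈ Icc 1 M, (j : ℝ) ^ (-β)) ~[atTop]
      fun M => (M : ℝ) ^ (1 - β) / (1 - β) := by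
  have hbdd : (fun M : ℕ => ∑ j ∈ Icc 1 M, (j : ℝ) ^ (-β) - (M : ℝ) ^ (1 - β) / (1 - β))
      =O[atTop] fun _ => (1 : ℝ) :=
    .of_bound (1 / (1 - β)) <| .of_forall fun M => by
      simpa using abs_sum_Icc_rpow_neg_sub_le hβ0 hβ1 M
  exact hbdd.trans_isLittleO <| isLittleO_const_left.2 <| .inr <|
    tendsto_norm_atTop_atTop.comp (tendsto_natCast_rpow_div_atTop hβ1)

lemma tendsto_sum_Icc_rpow_neg_atTop (hβ0 : 0 ≤ β) (hβ1 : β < 1) :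
    Tendsto (fun M : ℕ => ∑ j ∈ Icc 1 M, (j : ℝ) ^ (-β)) atTop atTop :=
  (isEquivalent_sum_Icc_rpow_neg hβ0 hβ1).symm.tendsto_atTop (tendsto_natCast_rpow_div_atTop hβ1)

end PowerSums

lemma tendsto_mul_sum_rpow_div_sq_sum_rpow {α : ℝ} (hα0 : 0 ≤ α) (hα1 : α < 1 / 2) :
    Tendsto (fun N : ℕ => N * (∑ j ∈ Icc 1 (N / 2), (j : ℝ) ^ (-(2 * α))) /
      (∑ j ∈ Icc 1 (N / 2), (j : ℝ) ^ (-α)) ^ 2) atTop (𝓝 (2 * (1 - α) ^ 2 / (1 - 2 * α))) := by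
  have hhalf : Tendsto (fun N : ℕ => N / 2) atTop atTop := Nat.tendsto_div_const_atTop two_ne_zero
  have hN : (fun N : ℕ => (N : ℝ)) ~[atTop] fun N => 2 * ((N / 2 : ℕ) : ℝ) := by
    have h := (isEquivalent_nat_floor (R := ℝ)).comp_tendsto
      ((tendsto_natCast_atTop_atTop (R := ℝ)).atTop_div_const (two_pos (α := ℝ)))
    simp only [Function.comp_def, Nat.floor_div_ofNat, Nat.floor_natCast] at h
    refine ((IsEquivalent.refl (u := fun _ : ℕ => (2 : ℝ))).mul h.symm).congr_left ?_
    exact .of_forall fun N => by simp only [Pi.mul_apply]; ring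
  have hS1 : (fun N : ℕ => ∑ j ∈ Icc 1 (N / 2), (j : ℝ) ^ (-α)) ~[atTop]
      fun N => ((N / 2 : ℕ) : ℝ) ^ (1 - α) / (1 - α) :=
    (isEquivalent_sum_Icc_rpow_neg hα0 (by linarith)).comp_tendsto hhalf
  have hS2 : (fun N : ℕ => ∑ j ∈ Icc 1 (N / 2), (j : ℝ) ^ (-(2 * α))) ~[atTop]
      fun N => ((N / 2 : ℕ) : ℝ) ^ (1 - 2 * α) / (1 - 2 * α) :=
    (isEquivalent_sum_Icc_rpow_neg (by linarith) (by linarith)).comp_tendsto hhalf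
  refine (((hN.mul hS2).div (hS1.pow 2)).trans_eventuallyEq ?_).tendsto_const
  filter_upwards [hhalf.eventually_gt_atTop 0] with N hpos
  have hm : (0 : ℝ) < (N / 2 : ℕ) := by exact_mod_cast hpos
  have hsq : (((N / 2 : ℕ) : ℝ) ^ (1 - α)) ^ 2 = (N / 2 : ℕ) * ((N / 2 : ℕ) : ℝ) ^ (1 - 2 * α) := by
    rw [← rpow_natCast, ← rpow_mul hm.le, show (1 - α) * ((2 : ℕ) : ℝ) = 1 + (1 - 2 * α) by
      push_cast; ring, rpow_add hm, rpow_one]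
  have : (0 : ℝ) < 1 - 2 * α := by linarith
  have : (0 : ℝ) < 1 - α := by linarith
  simp only [Pi.mul_apply, Pi.div_apply, Pi.pow_apply, div_pow, hsq, Function.const_apply]
  field_simp

lemma relaxProd_le_exp {α : ℝ} (hα0 : 0 ≤ α) (N : ℕ) (t : ℝ) :
    relaxProd α N t ≤ exp (-((1 - (2 * kacNorm α N * t) ^ 2 / 3) * (2 * kacNorm α N * t) ^ 2 *
      ∑ j ∈ Icc 1 (N / 2), (j : ℝ) ^ (-(2 * α)))) := by
  have hsq (j : ℕ) : ((j : ℝ) ^ (-α)) ^ 2 = (j : ℝ) ^ (-(2 * α)) := by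
    rw [← rpow_natCast, ← rpow_mul (Nat.cast_nonneg j)]; push_cast; ring_nf
  have hw : ∀ j ∈ Icc 1 (N / 2), ((j : ℝ) ^ (-α)) ^ 2 ≤ 1 := fun j hj =>
    pow_le_one₀ (rpow_nonneg j.cast_nonneg _) <| rpow_le_one_of_one_le_of_nonpos
      (by exact_mod_cast (mem_Icc.1 hj).1) (by linarith)
  have h := prod_cos_sq_mul_le_exp _ _ hw (2 * kacNorm α N * t)
  simp only [hsq] at h
  exact h

lemma sq_two_mul_kacNorm_mul_sqrt (α τ : ℝ) (N : ℕ) :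
    (2 * kacNorm α N * (τ * √N)) ^ 2 = τ ^ 2 * N / (∑ j ∈ Icc 1 (N / 2), (j : ℝ) ^ (-α)) ^ 2 := by
  rw [kacNorm, mul_inv, ← mul_assoc 2, mul_inv_cancel₀ two_ne_zero, one_mul, mul_pow, mul_pow,
    sq_sqrt N.cast_nonneg, inv_pow]
  ring

lemma sq_four_mul_div_two_rpow_mul_pi_le {α : ℝ} (hα0 : 0 ≤ α) :
    (4 * (1 - α) / (2 ^ α * π)) ^ 2 ≤ 2 * (1 - α) ^ 2 := by
  have h2 : 1 ≤ (2 : ℝ) ^ α := one_le_rpow one_le_two hα0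
  have hπ : 3 ≤ 2 ^ α * π := by nlinarith [pi_gt_three]
  rw [div_pow, div_le_iff₀ (by positivity)]
  nlinarith [mul_le_mul hπ hπ (by norm_num) (by positivity), sq_nonneg (1 - α)]

/-- Gaussian upper bound in rescaled time `t = τ √N` for `0 ≤ α < 1/2`. -/
theorem stmt_7 (α : ℝ) (hα0 : 0 ≤ α) (hα1 : α < 1 / 2) (τ : ℝ) :
    Filter.limsup (fun N : ℕ => relaxProd α N (τ * Real.sqrt N)) Filter.atTop ≤
      Real.exp (-(4 * (1 - α) / (2 ^ α * Real.pi)) ^ 2 * τ ^ 2 / (1 - 2 * α)) := by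
  set q : ℕ → ℝ := fun N => (2 * kacNorm α N * (τ * √N)) ^ 2
  set S : ℕ → ℝ := fun N => ∑ j ∈ Icc 1 (N / 2), (j : ℝ) ^ (-(2 * α))
  set L := τ ^ 2 * (2 * (1 - α) ^ 2 / (1 - 2 * α)) with hL
  have hqS : Tendsto (fun N => q N * S N) atTop (𝓝 L) :=
    ((tendsto_mul_sum_rpow_div_sq_sum_rpow hα0 hα1).const_mul (τ ^ 2)).congr fun N => by
      simp only [q, S, sq_two_mul_kacNorm_mul_sqrt]; ring
  have hS : Tendsto S atTop atTop :=
    (tendsto_sum_Icc_rpow_neg_atTop (by linarith) (by linarith)).comp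
      (Nat.tendsto_div_const_atTop two_ne_zero)
  have hq : Tendsto q atTop (𝓝 0) :=
    (hqS.div_atTop hS).congr' <| (hS.eventually_gt_atTop 0).mono fun N hN =>
      mul_div_cancel_right₀ _ hN.ne'
  have hlim : Tendsto (fun N => exp (-((1 - q N / 3) * q N * S N))) atTop (𝓝 (exp (-L))) := by
    have := (((tendsto_const_nhds (x := (1 : ℝ))).sub (hq.div_const 3)).mul hqS).neg.rexp
    simpa only [zero_div, sub_zero, one_mul, mul_assoc] using this
  calc limsup (fun N : ℕ => relaxProd α N (τ * √N)) atTop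
      ≤ limsup (fun N => exp (-((1 - q N / 3) * q N * S N))) atTop :=
        limsup_le_limsup (.of_forall fun N => relaxProd_le_exp hα0 N _)
          (isCoboundedUnder_le_of_eventually_le _
            (.of_forall fun N => prod_nonneg fun _ _ => sq_nonneg _))
          hlim.isBoundedUnder_le
    _ = exp (-L) := hlim.limsup_eq
    _ ≤ _ := by
      have : 0 < 1 - 2 * α := by linarith
      rw [exp_le_exp, neg_mul, neg_div, neg_le_neg_iff, hL, mul_comm, mul_div_assoc]
      gcongr
      exact sq_four_mul_div_two_rpow_mul_pi_le hα0
end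

section
/- (Relaxation to equilibrium in rescaled time; lifetime T₀ ∼ N^q with q = min{1/2, 1−α}.) Fix 0 ≤ α < 1 with α ≠ 1/2 and set q = min{1/2, 1−α}. Then the function τ ↦ limsup_{N→∞} P_{N,α}(τ N^{q}) tends to 0 as τ → ∞. -/
open Filter Real Finset Topology

theorem rpow_add_mul_rpow_sub_one_le {p x : ℝ} (hp0 : 0 ≤ p) (hp1 : p ≤ 1) (hx : 0 ≤ x) :
    x ^ p + p * (x + 1) ^ (p - 1) ≤ (x + 1) ^ p := by
  have hy : 0 < x + 1 := by linarith
  have hx_eq : x = (x + 1) * (1 + -(x + 1)⁻¹) := by field_simp; ring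
  have hs : -1 ≤ -(x + 1)⁻¹ := neg_le_neg (inv_le_one_of_one_le₀ (by linarith))
  have bernoulli := rpow_one_add_le_one_add_mul_self hs hp0 hp1
  calc x ^ p + p * (x + 1) ^ (p - 1)
      = (x + 1) ^ p * (1 + -(x + 1)⁻¹) ^ p + p * (x + 1) ^ (p - 1) := by
        rw [← mul_rpow hy.le (by linarith), ← hx_eq]
    _ ≤ (x + 1) ^ p * (1 + p * -(x + 1)⁻¹) + p * (x + 1) ^ (p - 1) := by gcongr
    _ = (x + 1) ^ p := by rw [rpow_sub_one hy.ne']; ring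

theorem one_sub_mul_sum_Icc_rpow_neg_le {α : ℝ} (hα0 : 0 ≤ α) (hα1 : α ≤ 1) (M : ℕ) :
    (1 - α) * ∑ j ∈ Icc 1 M, (j : ℝ) ^ (-α) ≤ (M : ℝ) ^ (1 - α) := by
  induction M with
  | zero =>
    simp only [Icc_eq_empty_of_lt zero_lt_one, sum_empty, mul_zero, Nat.cast_zero]
    exact rpow_nonneg le_rfl _
  | succ M ih =>
    rw [sum_Icc_succ_top (by omega), mul_add, Nat.cast_succ]
    have step := rpow_add_mul_rpow_sub_one_le (sub_nonneg.2 hα1) (by linarith) M.cast_nonneg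
    rw [show 1 - α - 1 = -α by ring] at step
    linarith

theorem rpow_one_sub_le_sum_Icc_rpow_neg {α : ℝ} (hα0 : 0 ≤ α) (M : ℕ) (hM : 1 ≤ M) :
    (M : ℝ) ^ (1 - α) ≤ ∑ j ∈ Icc 1 M, (j : ℝ) ^ (-α) := by
  have hM0 : (0 : ℝ) < M := by exact_mod_cast hM
  have hterm : ∀ j ∈ Icc 1 M, (M : ℝ) ^ (-α) ≤ (j : ℝ) ^ (-α) := fun j hj => by
    obtain ⟨hj1, hjM⟩ := mem_Icc.1 hj
    exact rpow_le_rpow_of_nonpos (by exact_mod_cast hj1) (by exact_mod_cast hjM) (by linarith)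
  calc (M : ℝ) ^ (1 - α) = #(Icc 1 M) • (M : ℝ) ^ (-α) := by
        rw [Nat.card_Icc, Nat.add_sub_cancel, nsmul_eq_mul, sub_eq_add_neg, rpow_add hM0,
          rpow_one]
    _ ≤ _ := card_nsmul_le_sum _ _ _ hterm

theorem sq_half_le_sin_sq {x : ℝ} (h0 : 0 ≤ x) (h1 : x ≤ 1) : (x / 2) ^ 2 ≤ sin x ^ 2 := by
  have hjordan := mul_le_sin h0 (h1.trans (by linarith [pi_gt_three]))
  have : x / 2 ≤ 2 / π * x := by
    rw [div_mul_eq_mul_div, le_div_iff₀ pi_pos]; nlinarith [pi_lt_four]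
  exact pow_le_pow_left₀ (by positivity) (this.trans hjordan) 2

theorem prod_cos_sq_le_exp_neg_sum_sin_sq {ι : Type*} {s F : Finset ι} (hF : F ⊆ s) (θ : ι → ℝ) :
    ∏ i ∈ s, cos (θ i) ^ 2 ≤ exp (-∑ i ∈ F, sin (θ i) ^ 2) := by
  calc ∏ i ∈ s, cos (θ i) ^ 2 ≤ ∏ i ∈ F, cos (θ i) ^ 2 :=
        prod_le_prod_of_subset_of_le_one hF (fun _ _ => sq_nonneg _) fun i _ _ => cos_sq_le_one _
    _ ≤ ∏ i ∈ F, exp (-sin (θ i) ^ 2) := by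
        gcongr with i
        rw [cos_sq']; linarith [add_one_le_exp (-sin (θ i) ^ 2)]
    _ = exp (-∑ i ∈ F, sin (θ i) ^ 2) := by rw [← sum_neg_distrib, exp_sum]

theorem tendsto_limsup_of_nonneg_of_eventually_le {ι κ : Type*} {l : Filter ι} {f : Filter κ}
    [f.NeBot] {u : ι → κ → ℝ} {g : ι → ℝ} (hu : ∀ i k, 0 ≤ u i k) (hg : Tendsto g l (𝓝 0))
    (hle : ∀ᶠ i in l, ∀ᶠ k in f, u i k ≤ g i) :
    Tendsto (fun i => limsup (u i) f) l (𝓝 0) := by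
  refine tendsto_of_tendsto_of_tendsto_of_le_of_le' (tendsto_const_nhds (x := (0 : ℝ))) hg ?_ ?_
  · filter_upwards [hle] with i hi
    exact le_limsup_of_frequently_le (Frequently.of_forall (hu i)) ⟨g i, eventually_map.2 hi⟩
  · filter_upwards [hle] with i hi
    exact limsup_le_of_le (isCoboundedUnder_le_of_le f (hu i)) hi

theorem prod_cos_sq_rpow_le_exp {α c : ℝ} (hα : 0 ≤ α) (hc : 0 ≤ c) {J K M : ℕ} (hJ : 1 ≤ J)
    (hK : K ≤ M) (hcJ : c * (J : ℝ) ^ (-α) ≤ 1) :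
    ∏ j ∈ Icc 1 M, cos (c * (j : ℝ) ^ (-α)) ^ 2 ≤
      exp (-((K + 1 - J : ℕ) * (c * (K : ℝ) ^ (-α) / 2) ^ 2)) := by
  have hwindow : Icc J K ⊆ Icc 1 M := Icc_subset_Icc hJ hK
  refine (prod_cos_sq_le_exp_neg_sum_sin_sq hwindow _).trans (exp_le_exp.2 (neg_le_neg ?_))
  rw [← Nat.card_Icc, ← nsmul_eq_mul]
  refine card_nsmul_le_sum _ _ _ fun j hj => ?_
  obtain ⟨hJj, hjK⟩ := mem_Icc.1 hj
  have hj0 : (0 : ℝ) < j := by exact_mod_cast hJ.trans hJj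
  have hθK : c * (K : ℝ) ^ (-α) ≤ c * (j : ℝ) ^ (-α) :=
    mul_le_mul_of_nonneg_left (rpow_le_rpow_of_nonpos hj0 (Nat.cast_le.2 hjK) (neg_nonpos.2 hα)) hc
  have hθJ : c * (j : ℝ) ^ (-α) ≤ 1 := le_trans (mul_le_mul_of_nonneg_left
    (rpow_le_rpow_of_nonpos (by exact_mod_cast hJ) (Nat.cast_le.2 hJj) (neg_nonpos.2 hα)) hc) hcJ
  calc (c * (K : ℝ) ^ (-α) / 2) ^ 2 ≤ (c * (j : ℝ) ^ (-α) / 2) ^ 2 := by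
        gcongr
    _ ≤ sin (c * (j : ℝ) ^ (-α)) ^ 2 := sq_half_le_sin_sq (by positivity) hθJ

theorem two_mul_kacNorm (α : ℝ) (N : ℕ) :
    2 * kacNorm α N = (∑ j ∈ Icc 1 (N / 2), (j : ℝ) ^ (-α))⁻¹ := by
  rw [kacNorm, mul_inv, ← mul_assoc, mul_inv_cancel₀ two_ne_zero, one_mul]

theorem kacNorm_nonneg (α : ℝ) (N : ℕ) : 0 ≤ kacNorm α N :=
  inv_nonneg.2 (mul_nonneg zero_le_two (sum_nonneg fun j _ => rpow_nonneg j.cast_nonneg _))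

theorem one_sub_le_two_mul_kacNorm_mul_rpow {α : ℝ} (hα0 : 0 ≤ α) (hα1 : α < 1) {N : ℕ}
    (hN : 2 ≤ N) : 1 - α ≤ 2 * kacNorm α N * (N : ℝ) ^ (1 - α) := by
  have hM : (0 : ℝ) < (N / 2 : ℕ) := by exact_mod_cast Nat.div_pos hN two_pos
  have hS := one_sub_mul_sum_Icc_rpow_neg_le hα0 hα1.le (N / 2)
  have hSpos := (rpow_pos_of_pos hM (1 - α)).trans_le (rpow_one_sub_le_sum_Icc_rpow_neg hα0 _
    (Nat.div_pos hN two_pos))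
  have hMN : ((N / 2 : ℕ) : ℝ) ^ (1 - α) ≤ (N : ℝ) ^ (1 - α) :=
    rpow_le_rpow hM.le (by exact_mod_cast Nat.div_le_self N 2) (by linarith)
  rw [two_mul_kacNorm, inv_mul_eq_div, le_div_iff₀ hSpos]
  exact hS.trans hMN

theorem two_mul_kacNorm_mul_rpow_le_three {α : ℝ} (hα0 : 0 ≤ α) (hα1 : α ≤ 1) {N : ℕ}
    (hN : 2 ≤ N) : 2 * kacNorm α N * (N : ℝ) ^ (1 - α) ≤ 3 := by
  have hM1 : 1 ≤ N / 2 := Nat.div_pos hN two_pos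
  have hM : (0 : ℝ) < (N / 2 : ℕ) := by exact_mod_cast hM1
  have hN3 : (N : ℝ) ≤ 3 * (N / 2 : ℕ) := by exact_mod_cast (by omega : N ≤ 3 * (N / 2))
  have hS := rpow_one_sub_le_sum_Icc_rpow_neg hα0 _ hM1
  have hSpos := (rpow_pos_of_pos hM (1 - α)).trans_le hS
  have h3 : (3 : ℝ) ^ (1 - α) ≤ 3 := rpow_le_self_of_one_le (by norm_num) (by linarith)
  rw [two_mul_kacNorm, inv_mul_eq_div, div_le_iff₀ hSpos]
  calc (N : ℝ) ^ (1 - α) ≤ (3 * (N / 2 : ℕ) : ℝ) ^ (1 - α) :=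
        rpow_le_rpow (by positivity) hN3 (by linarith)
    _ = (3 : ℝ) ^ (1 - α) * ((N / 2 : ℕ) : ℝ) ^ (1 - α) := mul_rpow (by norm_num) hM.le
    _ ≤ 3 * ∑ j ∈ Icc 1 (N / 2), (j : ℝ) ^ (-α) := by gcongr

theorem relaxProd_nonneg (α : ℝ) (N : ℕ) (t : ℝ) : 0 ≤ relaxProd α N t :=
  prod_nonneg fun _ _ => sq_nonneg _

theorem relaxProd_le_exp_window {α t : ℝ} (hα : 0 ≤ α) (ht : 0 ≤ t) {N J K : ℕ} (hJ : 1 ≤ J)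
    (hK : K ≤ N / 2) (hsmall : 2 * kacNorm α N * t * (J : ℝ) ^ (-α) ≤ 1) :
    relaxProd α N t ≤
      exp (-((K + 1 - J : ℕ) * (2 * kacNorm α N * t * (K : ℝ) ^ (-α) / 2) ^ 2)) :=
  prod_cos_sq_rpow_le_exp hα (by have := kacNorm_nonneg α N; positivity) hJ hK hsmall

theorem eventually_relaxProd_mul_sqrt_le {α τ : ℝ} (hα0 : 0 ≤ α) (hα : α < 1 / 2) (hτ : 0 ≤ τ) :
    ∀ᶠ N : ℕ in atTop,
      relaxProd α N (τ * (N : ℝ) ^ (1 / 2 : ℝ)) ≤ exp (-((1 - α) ^ 2 / 12 * τ ^ 2)) := by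
  have hgrowth : Tendsto (fun N : ℕ => (N : ℝ) ^ (1 / 2 - α)) atTop atTop :=
    (tendsto_rpow_atTop (by linarith)).comp tendsto_natCast_atTop_atTop
  filter_upwards [hgrowth.eventually_ge_atTop (3 * τ), eventually_ge_atTop 2] with N hlarge hN
  have hN0 : (0 : ℝ) < N := by positivity
  set M := N / 2
  set u := (N : ℝ) ^ (1 / 2 : ℝ)
  set v := (N : ℝ) ^ (-α)
  set c := 2 * kacNorm α N * (τ * u)
  have hu : 0 < u := rpow_pos_of_pos hN0 _
  have hv : 0 < v := rpow_pos_of_pos hN0 _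
  have huu : u * u = N := by rw [← rpow_add hN0]; norm_num
  have huv : u * v = (N : ℝ) ^ (1 / 2 - α) := by rw [← rpow_add hN0]; ring_nf
  have huuv : u * u * v = (N : ℝ) ^ (1 - α) := by
    rw [huu, ← rpow_one_add' hN0.le (by linarith)]; ring_nf
  have hr_lo := one_sub_le_two_mul_kacNorm_mul_rpow hα0 (by linarith) hN
  have hr_hi := two_mul_kacNorm_mul_rpow_le_three hα0 (by linarith) hN
  rw [← huuv] at hr_lo hr_hi
  rw [← huv] at hlarge
  -- `c` is the largest phase `θ_1`; it is small because `u v = N^(1/2-α)` grows.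
  have hcuv : c * (u * v) = τ * (2 * kacNorm α N * (u * u * v)) := by ring
  have hc0 : 0 ≤ c := by have := kacNorm_nonneg α N; positivity
  have hc1 : c ≤ 1 := by
    refine le_of_mul_le_mul_right ?_ (mul_pos hu hv)
    rw [hcuv, one_mul]
    exact (mul_le_mul_of_nonneg_left hr_hi hτ).trans (by linarith)
  have hcuv_lo : (1 - α) * τ ≤ c * (u * v) := by
    rw [hcuv, mul_comm (1 - α)]; exact mul_le_mul_of_nonneg_left hr_lo hτ
  have hMv : v ≤ (M : ℝ) ^ (-α) :=
    rpow_le_rpow_of_nonpos (by exact_mod_cast Nat.div_pos hN two_pos)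
      (by exact_mod_cast Nat.div_le_self N 2) (by linarith)
  have hN3 : (N : ℝ) ≤ 3 * M := by exact_mod_cast (by omega : N ≤ 3 * (N / 2))
  have hwindow := relaxProd_le_exp_window (J := 1) (K := M) hα0 (mul_nonneg hτ hu.le) le_rfl le_rfl
    (by rwa [Nat.cast_one, one_rpow, mul_one])
  refine hwindow.trans (exp_le_exp.2 (neg_le_neg ?_))
  rw [Nat.add_sub_cancel]
  calc (1 - α) ^ 2 / 12 * τ ^ 2 ≤ (c * (u * v)) ^ 2 / 12 := by
        rw [div_mul_eq_mul_div, ← mul_pow]; gcongr; exact mul_nonneg (by linarith) hτ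
    _ = (c * v / 2) ^ 2 * (N / 3) := by rw [mul_pow, mul_pow, ← huu]; ring
    _ ≤ M * (c * (M : ℝ) ^ (-α) / 2) ^ 2 := by
        rw [mul_comm]; gcongr; linarith

theorem eventually_relaxProd_mul_rpow_le {α τ : ℝ} (hα : 1 / 2 < α) (hα1 : α < 1) (hτ : 1 ≤ τ) :
    ∀ᶠ N : ℕ in atTop, relaxProd α N (τ * (N : ℝ) ^ (1 - α)) ≤
      exp (-((1 - α) ^ 2 / 576 * (3 * τ) ^ α⁻¹)) := by
  have hα0 : 0 < α := by linarith
  -- `x` is where the upper bound `3 τ j^(-α)` on the phases `θ_j` drops to `1`.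
  set x := (3 * τ) ^ α⁻¹
  have hx1 : 1 ≤ x := one_le_rpow (by linarith) (inv_nonneg.2 hα0.le)
  have hxα : x ^ (-α) = (3 * τ)⁻¹ := by
    rw [rpow_neg (by positivity), ← rpow_mul (by positivity), inv_mul_cancel₀ hα0.ne', rpow_one]
  set J := ⌈x⌉₊
  have hJ1 : 1 ≤ J := Nat.one_le_ceil_iff.2 (by linarith)
  have hxJ : x ≤ J := Nat.le_ceil x
  have hJx : (J : ℝ) ≤ 2 * x := by linarith [Nat.ceil_lt_add_one (zero_le_one.trans hx1)]
  filter_upwards [eventually_ge_atTop (4 * J), eventually_ge_atTop 2] with N hNJ hN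
  set c := 2 * kacNorm α N * (τ * (N : ℝ) ^ (1 - α))
  have hc : c = (2 * kacNorm α N * (N : ℝ) ^ (1 - α)) * τ := by ring
  have hc_lo : (1 - α) * τ ≤ c := hc ▸ mul_le_mul_of_nonneg_right
    (one_sub_le_two_mul_kacNorm_mul_rpow hα0.le hα1 hN) (by linarith)
  have hc_hi : c ≤ 3 * τ := hc ▸ mul_le_mul_of_nonneg_right
    (two_mul_kacNorm_mul_rpow_le_three hα0.le hα1.le hN) (by linarith)
  have hJα : (J : ℝ) ^ (-α) ≤ (3 * τ)⁻¹ :=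
    hxα ▸ rpow_le_rpow_of_nonpos (by linarith) hxJ (by linarith)
  have h2Jα : (4 : ℝ)⁻¹ * (3 * τ)⁻¹ ≤ ((2 * J : ℕ) : ℝ) ^ (-α) := by
    have h4 : (4 : ℝ)⁻¹ ≤ (4 : ℝ) ^ (-α) := by
      rw [← rpow_neg_one]; exact rpow_le_rpow_of_exponent_le (by norm_num) (by linarith)
    calc (4 : ℝ)⁻¹ * (3 * τ)⁻¹ ≤ (4 : ℝ) ^ (-α) * x ^ (-α) := by rw [hxα]; gcongr
      _ = (4 * x) ^ (-α) := (mul_rpow (by norm_num) (by linarith)).symm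
      _ ≤ ((2 * J : ℕ) : ℝ) ^ (-α) :=
        rpow_le_rpow_of_nonpos (by positivity) (by push_cast; linarith) (by linarith)
  have hwindow := relaxProd_le_exp_window (K := 2 * J) hα0.le (by positivity) hJ1 (by omega)
    (le_trans (mul_le_mul hc_hi hJα (by positivity) (by positivity))
      (by rw [mul_inv_cancel₀ (by positivity)]))
  refine hwindow.trans (exp_le_exp.2 (neg_le_neg ?_))
  rw [show 2 * J + 1 - J = J + 1 by omega]
  have hθ : (1 - α) / 12 ≤ c * ((2 * J : ℕ) : ℝ) ^ (-α) :=
    calc (1 - α) / 12 = (1 - α) * τ * ((4 : ℝ)⁻¹ * (3 * τ)⁻¹) := by field_simp; ring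
      _ ≤ c * ((2 * J : ℕ) : ℝ) ^ (-α) :=
        mul_le_mul hc_lo h2Jα (by positivity) ((mul_nonneg (by linarith) (by linarith)).trans hc_lo)
  calc (1 - α) ^ 2 / 576 * x = x * ((1 - α) / 12 / 2) ^ 2 := by ring
    _ ≤ ((J + 1 : ℕ) : ℝ) * (c * ((2 * J : ℕ) : ℝ) ^ (-α) / 2) ^ 2 := by
        gcongr
        push_cast; linarith

/-- relaxation in rescaled time; lifetime `T₀ ∼ N^q`, `q = min{1/2, 1−α}`:
for `0 ≤ α < 1`, `α ≠ 1/2`, the function `τ ↦ limsup_{N→∞} P_{N,α}(τ N^q)` tends to `0`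
as `τ → ∞`. -/
theorem stmt_11 (α : ℝ) (hα0 : 0 ≤ α) (hα1 : α < 1) (hα2 : α ≠ 1 / 2)
    (q : ℝ) (hq : q = min (1 / 2) (1 - α)) :
    Filter.Tendsto
      (fun τ : ℝ => Filter.limsup (fun N : ℕ => relaxProd α N (τ * (N : ℝ) ^ q)) Filter.atTop)
      Filter.atTop (nhds 0) := by
  have hdecay {k : ℝ} (hk : 0 < k) {f : ℝ → ℝ} (hf : Tendsto f atTop atTop) :
      Tendsto (fun τ => exp (-(k * f τ))) atTop (𝓝 0) :=
    tendsto_exp_neg_atTop_nhds_zero.comp (hf.const_mul_atTop hk)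
  rcases hα2.lt_or_gt with hsmall | hlarge
  · obtain rfl : q = 1 / 2 := hq.trans (min_eq_left (by linarith))
    exact tendsto_limsup_of_nonneg_of_eventually_le (fun τ N => relaxProd_nonneg α N _)
      (hdecay (by positivity) (tendsto_pow_atTop two_ne_zero))
      ((eventually_ge_atTop 0).mono fun τ hτ => eventually_relaxProd_mul_sqrt_le hα0 hsmall hτ)
  · obtain rfl : q = 1 - α := hq.trans (min_eq_right (by linarith))
    exact tendsto_limsup_of_nonneg_of_eventually_le (fun τ N => relaxProd_nonneg α N _)
      (hdecay (by positivity) ((tendsto_rpow_atTop (inv_pos.2 (by linarith))).comp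
        (tendsto_id.const_mul_atTop three_pos)))
      ((eventually_ge_atTop 1).mono fun τ hτ => eventually_relaxProd_mul_rpow_le hlarge hα1 hτ)
end
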